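/- arXiv:2101.12711 — 3 statements merged into one kernel-verified Lean document; each statement's English description precedes it below -/
import Mathlib

section
/- Let (X,d) be a proper metric space and let μ be a Borel measure on X which is finite on bounded sets and satisfies μ({x : d(x,p) = r}) = 0 for every p ∈ X and every r > 0. Let (E_i)_{i∈ℕ} be a sequence of bounded Borel subsets of X with lim_i μ(E_i) = W ∈ (0,∞). Then, after passing to a subsequence, exactly one of the following three alternatives occurs. (1) (Vanishing) For every R > 0 one has lim_i sup_{p∈X} μ(E_i ∩ B_R(p)) = 0. (2) (Compactness) There exists a sequence of points p_i ∈ X such that for every ε ∈ (0, W/2) there exist R ≥ 1 and i_ε ∈ ℕ with μ(E_i ∩ B_R(p_i)) ≥ W − ε for all i ≥ i_ε; moreover there exist I ∈ ℕ and r ≥ 1 such that μ(E_i ∩ B_r(p_i)) ≥ μ(E_i ∩ B_r(q)) for every q ∈ X and every i, and μ(E_i ∩ B_r(p_i)) > W/2 for all i ≥ I. (3) (Dichotomy) There exists w ∈ (0, W) such that for every ε ∈ (0, w/2) there exist R ≥ 1, i_ε ∈ ℕ, a sequence of points p_i ∈ X and radii R_i → +∞ such that, for every i ≥ i_ε: |μ(E_i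 ∩ B_R(p_i)) − w| < ε, |μ(E_i ∖ B_{R_i}(p_i)) − (W − w)| < ε, and μ(E_i ∩ B_R(p_i)) ≥ μ(E_i ∩ B_R(q)) for every q ∈ X. -/
open MeasureTheory Metric Filter Bornology

section Defs

variable {X : Type*} [MetricSpace X] [MeasurableSpace X]

/-- Vanishing alternative of the concentration-compactness lemma. -/
def CCVanishing (μ : Measure X) (E : ℕ → Set X) : Prop :=
  ∀ R : ℝ, 0 < R →
    Tendsto (fun i => ⨆ p : X, (μ (E i ∩ ball p R)).toReal) atTop (nhds 0)

/-- Compactness alternative of the concentration-compactness lemma. -/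
def CCCompactness (μ : Measure X) (E : ℕ → Set X) (W : ℝ) : Prop :=
  ∃ p : ℕ → X,
    (∀ ε : ℝ, 0 < ε → ε < W / 2 →
      ∃ R : ℝ, 1 ≤ R ∧ ∃ iε : ℕ, ∀ i, iε ≤ i →
        W - ε ≤ (μ (E i ∩ ball (p i) R)).toReal) ∧
    ∃ I : ℕ, ∃ r : ℝ, 1 ≤ r ∧
      (∀ i : ℕ, ∀ q : X, μ (E i ∩ ball q r) ≤ μ (E i ∩ ball (p i) r)) ∧
      ∀ i, I ≤ i → W / 2 < (μ (E i ∩ ball (p i) r)).toReal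

/-- Dichotomy alternative of the concentration-compactness lemma. -/
def CCDichotomy (μ : Measure X) (E : ℕ → Set X) (W : ℝ) : Prop :=
  ∃ w : ℝ, 0 < w ∧ w < W ∧
    ∀ ε : ℝ, 0 < ε → ε < w / 2 →
      ∃ R : ℝ, 1 ≤ R ∧ ∃ iε : ℕ, ∃ p : ℕ → X, ∃ Ri : ℕ → ℝ,
        Tendsto Ri atTop atTop ∧
        ∀ i, iε ≤ i →
          |(μ (E i ∩ ball (p i) R)).toReal - w| < ε ∧
          |(μ (E i \ ball (p i) (Ri i))).toReal - (W - w)| < ε ∧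
          ∀ q : X, μ (E i ∩ ball q R) ≤ μ (E i ∩ ball (p i) R)

end Defs

open scoped ENNReal Topology

/-!
Along a subsequence, the concentration functions `Qᵢ(R) = sup_p μ(Eᵢ ∩ B_R(p))` converge at
every integer radius `n` to a nondecreasing limit `L n`, and the alternative is read off from
`w = lim L ∈ [0, W]`: `w = 0` is vanishing, `w = W` is compactness, and `0 < w < W` is dichotomy,
where a diagonal choice of radii `Rᵢ → ∞` keeps the mass of `Eᵢ ∩ B_{Rᵢ}(pᵢ)` close to `w`.
The suprema are attained because null spheres make the mass of a ball depend continuously on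
its centre, and it vanishes off a compact set. The alternatives exclude each other because two
balls carrying more than the total mass of `Eᵢ` must meet.
-/

theorem exists_tendsto_atTop_eventually_diag {P : ℕ → ℕ → Prop}
    (h : ∀ k, ∀ᶠ i in atTop, P k i) :
    ∃ K : ℕ → ℕ, Tendsto K atTop atTop ∧ ∀ᶠ i in atTop, P (K i) i := by
  choose N hN using fun k => eventually_atTop.1 (h k)
  classical
  -- `K i` is the largest `k ≤ i` whose threshold `max (N k) k` has been passed by `i`.
  refine ⟨fun i => Nat.findGreatest (fun k => max (N k) k ≤ i) i,
    tendsto_atTop_atTop.2 fun k => ⟨max (N k) k, fun i hi =>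
      Nat.le_findGreatest ((le_max_right _ _).trans hi) hi⟩, ?_⟩
  filter_upwards [eventually_ge_atTop (max (N 0) 0)] with i hi
  exact hN _ _ ((le_max_left _ _).trans
    (Nat.findGreatest_spec (P := fun k => max (N k) k ≤ i) (Nat.zero_le i) hi))

theorem exists_strictMono_tendsto_of_mem_Icc {u : ℕ → ℕ → ℝ} {a b : ℝ}
    (hu : ∀ i n, u i n ∈ Set.Icc a b) :
    ∃ φ : ℕ → ℕ, StrictMono φ ∧ ∃ L : ℕ → ℝ,
      ∀ n, Tendsto (fun i => u (φ i) n) atTop (𝓝 (L n)) := by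
  obtain ⟨L, -, φ, hφ, hL⟩ := (isCompact_univ_pi fun _ : ℕ => isCompact_Icc).tendsto_subseq
    fun i => Set.mem_univ_pi.2 (hu i)
  exact ⟨φ, hφ, L, tendsto_pi_nhds.1 hL⟩

theorem Metric.ball_subset_ball_of_nonempty_inter {X : Type*} [PseudoMetricSpace X]
    {p q : X} {r s : ℝ} (h : (ball p r ∩ ball q s).Nonempty) :
    ball q s ⊆ ball p (r + 2 * s) := by
  obtain ⟨x, hxp, hxq⟩ := h
  refine ball_subset_ball' ?_
  linarith [dist_triangle q x p, mem_ball.1 hxp, mem_ball'.1 hxq]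

section MeasureInter

variable {α : Type*} [MeasurableSpace α] {μ : Measure α} {E : Set α}

theorem toReal_measure_inter_mono (hE : μ E ≠ ∞) {A B : Set α} (h : A ⊆ B) :
    (μ (E ∩ A)).toReal ≤ (μ (E ∩ B)).toReal :=
  ENNReal.toReal_mono (measure_inter_lt_top_of_left_ne_top hE).ne
    (measure_mono (Set.inter_subset_inter_right E h))

theorem nonempty_inter_of_toReal_lt_add (hE : μ E ≠ ∞) {A B : Set α}
    (hA : MeasurableSet A) (h : (μ E).toReal < (μ (E ∩ A)).toReal + (μ (E ∩ B)).toReal) :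
    (A ∩ B).Nonempty := by
  have hEA : μ (E ∩ A) ≠ ∞ := (measure_inter_lt_top_of_left_ne_top hE).ne
  have hEB : μ (E ∩ B) ≠ ∞ := (measure_inter_lt_top_of_left_ne_top hE).ne
  have hlt : μ E < μ (E ∩ A) + μ (E ∩ B) := by
    rwa [← ENNReal.toReal_lt_toReal hE (ENNReal.add_ne_top.2 ⟨hEA, hEB⟩),
      ENNReal.toReal_add hEA hEB]
  refine nonempty_inter_of_measure_lt_add' (μ.restrict E) hA (Set.subset_univ _)
    (Set.subset_univ _) ?_
  rw [Measure.restrict_apply_univ]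
  refine hlt.trans_le (add_le_add ?_ ?_) <;>
    simpa only [Set.inter_comm E] using Measure.le_restrict_apply _ _

end MeasureInter

section BallMass

variable {X : Type*} [MetricSpace X] [MeasurableSpace X] {μ : Measure X} {E : Set X}

theorem continuous_measure_inter_ball [OpensMeasurableSpace X] (hE : μ E ≠ ∞) {R : ℝ}
    (hsph : ∀ p, μ (sphere p R) = 0) : Continuous fun p => μ (E ∩ ball p R) := by
  have : IsFiniteMeasure (μ.restrict E) := isFiniteMeasure_restrict.2 hE
  simp_rw [Set.inter_comm E, ← Measure.restrict_apply measurableSet_ball]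
  refine continuous_iff_continuousAt.2 fun p =>
    tendsto_measure_of_ae_tendsto_indicator_of_isFiniteMeasure _ measurableSet_ball
      (fun _ => measurableSet_ball) (ae_restrict_of_ae ?_)
  filter_upwards [measure_eq_zero_iff_ae_notMem.1 (hsph p)] with x hx
  have hdist : Continuous fun q => dist x q := continuous_const.dist continuous_id
  rcases lt_or_gt_of_ne (mt mem_sphere.2 hx) with h | h
  · filter_upwards [hdist.continuousAt.eventually_lt continuousAt_const h] with q hq
    simp only [mem_ball, hq, h]
  · filter_upwards [continuousAt_const.eventually_lt hdist.continuousAt h] with q hq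
    simp only [mem_ball, hq.not_gt, h.not_gt]

theorem exists_forall_measure_inter_ball_le [ProperSpace X] [OpensMeasurableSpace X]
    [Nonempty X] (hEb : IsBounded E) (hE : μ E ≠ ∞)
    (hsph : ∀ (p : X) (r : ℝ), 0 < r → μ (sphere p r) = 0) (R : ℝ) :
    ∃ p, ∀ q, μ (E ∩ ball q R) ≤ μ (E ∩ ball p R) := by
  rcases le_or_gt R 0 with hR | hR
  · exact ⟨Classical.arbitrary X, fun q => by simp [ball_eq_empty.2 hR]⟩
  rcases E.eq_empty_or_nonempty with rfl | ⟨x, hx⟩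
  · exact ⟨Classical.arbitrary X, fun q => by simp⟩
  -- Only centres in the compact set `cthickening R E` see any of `E`.
  obtain ⟨p, -, hp⟩ := (isCompact_of_isClosed_isBounded isClosed_cthickening
    hEb.cthickening).exists_isMaxOn ⟨x, self_subset_cthickening E hx⟩
    (continuous_measure_inter_ball hE fun p => hsph p R hR).continuousOn
  refine ⟨p, fun q => ?_⟩
  by_cases hq : q ∈ cthickening R E
  · exact hp hq
  · have : E ∩ ball q R = ∅ := Set.eq_empty_of_forall_notMem fun y hy =>
      hq (mem_cthickening_of_dist_le q y R E hy.1 (mem_ball'.1 hy.2).le)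
    simp [this]

end BallMass

section Concentration

variable {X : Type*} [MetricSpace X] [MeasurableSpace X] {μ : Measure X} {E : Set X} {R : ℝ}

/-- Lions' concentration function of `E` at radius `R`. -/
noncomputable def concentration (μ : Measure X) (E : Set X) (R : ℝ) : ℝ :=
  ⨆ p : X, (μ (E ∩ ball p R)).toReal

theorem ccVanishing_iff {F : ℕ → Set X} :
    CCVanishing μ F ↔
      ∀ R : ℝ, 0 < R → Tendsto (fun i => concentration μ (F i) R) atTop (𝓝 0) :=
  Iff.rfl

theorem concentration_nonneg : 0 ≤ concentration μ E R :=
  Real.iSup_nonneg fun _ => ENNReal.toReal_nonneg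

theorem toReal_measure_inter_ball_le_concentration (hE : μ E ≠ ∞) (p : X) :
    (μ (E ∩ ball p R)).toReal ≤ concentration μ E R :=
  le_ciSup (f := fun p => (μ (E ∩ ball p R)).toReal)
    ⟨(μ E).toReal, Set.forall_mem_range.2 fun _ =>
      ENNReal.toReal_mono hE (measure_mono Set.inter_subset_left)⟩ p

theorem concentration_le_toReal_measure (hE : μ E ≠ ∞) :
    concentration μ E R ≤ (μ E).toReal :=
  Real.iSup_le (fun _ => ENNReal.toReal_mono hE (measure_mono Set.inter_subset_left))
    ENNReal.toReal_nonneg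

theorem concentration_mono (hE : μ E ≠ ∞) : Monotone (concentration μ E) := fun _ _ h =>
  Real.iSup_le (fun p => (toReal_measure_inter_mono hE (ball_subset_ball h)).trans
    (toReal_measure_inter_ball_le_concentration hE p)) concentration_nonneg

theorem concentration_eq_of_forall_le (hE : μ E ≠ ∞) {p : X}
    (hp : ∀ q, μ (E ∩ ball q R) ≤ μ (E ∩ ball p R)) :
    concentration μ E R = (μ (E ∩ ball p R)).toReal :=
  le_antisymm
    (Real.iSup_le (fun q => ENNReal.toReal_mono (measure_inter_lt_top_of_left_ne_top hE).ne
      (hp q)) ENNReal.toReal_nonneg)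
    (toReal_measure_inter_ball_le_concentration hE p)

theorem exists_subseq_concentration_tendsto {E : ℕ → Set X} {W : ℝ}
    (hfin : ∀ i, μ (E i) ≠ ∞) (hlim : Tendsto (fun i => (μ (E i)).toReal) atTop (𝓝 W)) :
    ∃ φ : ℕ → ℕ, StrictMono φ ∧ ∃ L : ℕ → ℝ, ∃ w : ℝ,
      Monotone L ∧ Tendsto L atTop (𝓝 w) ∧ 0 ≤ w ∧ w ≤ W ∧
      ∀ n : ℕ, Tendsto (fun i => concentration μ (E (φ i)) n) atTop (𝓝 (L n)) := by
  obtain ⟨B, hB⟩ := hlim.bddAbove_range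
  obtain ⟨φ, hφ, L, hQ⟩ := exists_strictMono_tendsto_of_mem_Icc
    (u := fun i (n : ℕ) => concentration μ (E i) n) fun i _ =>
      ⟨concentration_nonneg, (concentration_le_toReal_measure (hfin i)).trans (hB ⟨i, rfl⟩)⟩
  have hL : Monotone L := fun m n hmn => le_of_tendsto_of_tendsto' (hQ m) (hQ n) fun i =>
    concentration_mono (hfin _) (Nat.cast_le.2 hmn)
  have hLW : ∀ n, L n ≤ W := fun n => le_of_tendsto_of_tendsto' (hQ n)
    (hlim.comp hφ.tendsto_atTop) fun i => concentration_le_toReal_measure (hfin _)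
  have hLw := tendsto_atTop_ciSup hL ⟨W, Set.forall_mem_range.2 hLW⟩
  refine ⟨φ, hφ, L, _, hL, hLw, ?_, ciSup_le hLW, hQ⟩
  exact (ge_of_tendsto' (hQ 0) fun _ => concentration_nonneg).trans (hL.ge_of_tendsto hLw 0)

end Concentration

section Alternatives

variable {X : Type*} [MetricSpace X] [MeasurableSpace X] {μ : Measure X} {F : ℕ → Set X}
  {W : ℝ}

theorem not_ccVanishing_of_eventually_le (hfin : ∀ i, μ (F i) ≠ ∞) {p : ℕ → X} {R c : ℝ}
    (hR : 0 < R) (hc : 0 < c) (h : ∀ᶠ i in atTop, c ≤ (μ (F i ∩ ball (p i) R)).toReal) :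
    ¬ CCVanishing μ F := fun hV =>
  hc.not_ge <| ge_of_tendsto (ccVanishing_iff.1 hV R hR) <| h.mono fun i hi =>
    hi.trans (toReal_measure_inter_ball_le_concentration (hfin i) (p i))

theorem CCCompactness.not_ccVanishing (hfin : ∀ i, μ (F i) ≠ ∞) (hW : 0 < W)
    (hC : CCCompactness μ F W) : ¬ CCVanishing μ F := by
  obtain ⟨p, -, I, r, hr, -, hgt⟩ := hC
  exact not_ccVanishing_of_eventually_le hfin (p := p) (by linarith) (half_pos hW)
    (eventually_atTop.2 ⟨I, fun i hi => (hgt i hi).le⟩)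

theorem CCDichotomy.not_ccVanishing (hfin : ∀ i, μ (F i) ≠ ∞) (hD : CCDichotomy μ F W) :
    ¬ CCVanishing μ F := by
  obtain ⟨w, hw, -, hD⟩ := hD
  obtain ⟨R, hR, iε, p, Ri, -, h⟩ := hD (w / 4) (by positivity) (by linarith)
  exact not_ccVanishing_of_eventually_le hfin (p := p) (by linarith) (by positivity : 0 < w / 2)
    (eventually_atTop.2 ⟨iε, fun i hi => by linarith [(abs_lt.1 (h i hi).1).1]⟩)

theorem CCCompactness.not_ccDichotomy [OpensMeasurableSpace X] (hfin : ∀ i, μ (F i) ≠ ∞)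
    (hlim : Tendsto (fun i => (μ (F i)).toReal) atTop (𝓝 W)) (hC : CCCompactness μ F W) :
    ¬ CCDichotomy μ F W := by
  rintro ⟨w, hw, hwW, hD⟩
  obtain ⟨p', hC, -⟩ := hC
  set ε := min w (W - w) / 4
  have hεw : ε ≤ w / 4 := div_le_div_of_nonneg_right (min_le_left _ _) (by norm_num)
  have hεW : ε ≤ (W - w) / 4 := div_le_div_of_nonneg_right (min_le_right _ _) (by norm_num)
  have hε : 0 < ε := div_pos (lt_min hw (sub_pos.2 hwW)) (by norm_num)
  obtain ⟨R, -, iε, p, Ri, hRi, hD⟩ := hD ε hε (by linarith)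
  obtain ⟨R', -, iε', hC⟩ := hC ε hε (by linarith)
  obtain ⟨i, hF, hRi, hi, hi'⟩ := ((hlim.eventually_lt_const (show W < W + ε by linarith)).and
    ((hRi.eventually_gt_atTop (R + 2 * R')).and
      ((eventually_ge_atTop iε).and (eventually_ge_atTop iε')))).exists
  obtain ⟨hin, hout, -⟩ := hD i hi
  have hfar := measureReal_inter_add_sdiff (μ := μ) (s := F i) (measurableSet_ball (x := p i)
    (ε := Ri i)) (hfin i)
  simp only [Measure.real] at hfar
  have hnear : (ball (p i) R ∩ ball (p' i) R').Nonempty :=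
    nonempty_inter_of_toReal_lt_add (hfin i) measurableSet_ball
      (by linarith [(abs_lt.1 hin).1, hC i hi'])
  obtain ⟨y, hy, hy'⟩ : ((ball (p i) (Ri i))ᶜ ∩ ball (p' i) R').Nonempty :=
    nonempty_inter_of_toReal_lt_add (hfin i) measurableSet_ball.compl
      (by rw [← Set.sdiff_eq]; linarith [(abs_lt.1 hout).1, hC i hi'])
  exact hy (ball_subset_ball hRi.le (ball_subset_ball_of_nonempty_inter hnear hy'))

end Alternatives

section Trichotomy

variable {X : Type*} [MetricSpace X] [MeasurableSpace X] {μ : Measure X} {F : ℕ → Set X}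
  {L : ℕ → ℝ} {w W : ℝ}

theorem ccVanishing_of_tendsto (hfin : ∀ i, μ (F i) ≠ ∞)
    (hQ : ∀ n : ℕ, Tendsto (fun i => concentration μ (F i) n) atTop (𝓝 (L n)))
    (hL : Monotone L) (hL0 : Tendsto L atTop (𝓝 0)) : CCVanishing μ F := by
  have hLzero : ∀ n, L n = 0 := fun n => le_antisymm (hL.ge_of_tendsto hL0 n)
    (ge_of_tendsto' (hQ n) fun _ => concentration_nonneg)
  intro R _
  obtain ⟨n, hn⟩ := exists_nat_ge R
  exact squeeze_zero (fun _ => concentration_nonneg)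
    (fun i => concentration_mono (hfin i) hn) (hLzero n ▸ hQ n)

variable [OpensMeasurableSpace X] {c : ℕ → ℝ → X}

theorem ccCompactness_of_tendsto (hfin : ∀ i, μ (F i) ≠ ∞)
    (hc : ∀ i R q, μ (F i ∩ ball q R) ≤ μ (F i ∩ ball (c i R) R))
    (hlim : Tendsto (fun i => (μ (F i)).toReal) atTop (𝓝 W))
    (hQ : ∀ n : ℕ, Tendsto (fun i => (μ (F i ∩ ball (c i n) n)).toReal) atTop (𝓝 (L n)))
    (hLW : Tendsto L atTop (𝓝 W)) (hW : 0 < W) : CCCompactness μ F W := by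
  obtain ⟨m, hLm, hm⟩ :=
    ((hLW.eventually_const_lt (half_lt_self hW)).and (eventually_ge_atTop 1)).exists
  refine ⟨fun i => c i m, fun ε hε hεW => ?_, ?_⟩
  · obtain ⟨m', hLm', hm'⟩ :=
      ((hLW.eventually_const_lt (sub_lt_self W hε)).and (eventually_ge_atTop 1)).exists
    obtain ⟨iε, hiε⟩ := eventually_atTop.1 (((hQ m').eventually_const_lt hLm').and
      (((hQ m).eventually_const_lt hLm).and
        (hlim.eventually_lt_const (show W < W / 2 + (W - ε) by linarith))))
    refine ⟨m + 2 * m', by norm_cast; omega, iε, fun i hi => ?_⟩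
    obtain ⟨hi', hi, hF⟩ := hiε i hi
    have hmeet := nonempty_inter_of_toReal_lt_add (hfin i) (measurableSet_ball (x := c i m))
      (B := ball (c i m') m') (by linarith)
    exact hi'.le.trans (toReal_measure_inter_mono (hfin i)
      (ball_subset_ball_of_nonempty_inter hmeet))
  · obtain ⟨I, hI⟩ := eventually_atTop.1 ((hQ m).eventually_const_lt hLm)
    exact ⟨I, m, by exact_mod_cast hm, fun i q => hc i m q, hI⟩

theorem ccDichotomy_of_tendsto (hfin : ∀ i, μ (F i) ≠ ∞)
    (hc : ∀ i R q, μ (F i ∩ ball q R) ≤ μ (F i ∩ ball (c i R) R))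
    (hlim : Tendsto (fun i => (μ (F i)).toReal) atTop (𝓝 W))
    (hQ : ∀ n : ℕ, Tendsto (fun i => (μ (F i ∩ ball (c i n) n)).toReal) atTop (𝓝 (L n)))
    (hL : Monotone L) (hLw : Tendsto L atTop (𝓝 w)) (hw : 0 < w) (hwW : w < W) :
    CCDichotomy μ F W := by
  refine ⟨w, hw, hwW, fun ε hε _ => ?_⟩
  obtain ⟨m, hLm, hm⟩ := ((hLw.eventually_const_lt (show w - ε / 2 < w by linarith)).and
    (eventually_ge_atTop 1)).exists
  have hupper (k : ℕ) : ∀ᶠ i in atTop, (μ (F i ∩ ball (c i m) k)).toReal < w + ε / 4 :=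
    ((hQ k).eventually_lt_const (by linarith [hL.ge_of_tendsto hLw k])).mono fun i hi =>
      (ENNReal.toReal_mono (measure_inter_lt_top_of_left_ne_top (hfin i)).ne
        (hc i k (c i m))).trans_lt hi
  obtain ⟨K, hK, hKi⟩ := exists_tendsto_atTop_eventually_diag hupper
  obtain ⟨iε, hiε⟩ := eventually_atTop.1 (hKi.and ((hK.eventually_ge_atTop m).and
    (((hQ m).eventually_const_lt hLm).and
      ((hlim.eventually_lt_const (show W < W + ε / 4 by linarith)).and
        (hlim.eventually_const_lt (show W - ε / 4 < W by linarith))))))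
  refine ⟨m, by exact_mod_cast hm, iε, fun i => c i m, fun i => K i,
    tendsto_natCast_atTop_atTop.comp hK, fun i hi => ?_⟩
  obtain ⟨hout, hKm, hin, hF, hF'⟩ := hiε i hi
  have hmono := toReal_measure_inter_mono (hfin i) (ball_subset_ball (x := c i m)
    (Nat.cast_le.2 hKm : (m : ℝ) ≤ K i))
  have hfar := measureReal_inter_add_sdiff (μ := μ) (s := F i)
    (measurableSet_ball (x := c i m) (ε := K i)) (hfin i)
  simp only [Measure.real] at hfar
  refine ⟨abs_sub_lt_iff.2 ⟨by linarith, by linarith⟩, abs_sub_lt_iff.2 ⟨by linarith, by linarith⟩,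
    hc i m⟩

end Trichotomy

theorem concentration_compactness_general
    {X : Type*} [MetricSpace X] [ProperSpace X] [MeasurableSpace X] [BorelSpace X]
    (μ : Measure X)
    (hfin : ∀ s : Set X, IsBounded s → μ s ≠ ⊤)
    (hsph : ∀ (p : X) (r : ℝ), 0 < r → μ (sphere p r) = 0)
    (E : ℕ → Set X)
    (hbd : ∀ i, IsBounded (E i))
    (W : ℝ) (hW : 0 < W)
    (hlim : Tendsto (fun i => (μ (E i)).toReal) atTop (nhds W)) :
    ∃ φ : ℕ → ℕ, StrictMono φ ∧
      ((CCVanishing μ (E ∘ φ) ∧ ¬ CCCompactness μ (E ∘ φ) W ∧ ¬ CCDichotomy μ (E ∘ φ) W) ∨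
       (CCCompactness μ (E ∘ φ) W ∧ ¬ CCVanishing μ (E ∘ φ) ∧ ¬ CCDichotomy μ (E ∘ φ) W) ∨
       (CCDichotomy μ (E ∘ φ) W ∧ ¬ CCVanishing μ (E ∘ φ) ∧ ¬ CCCompactness μ (E ∘ φ) W)) := by
  obtain ⟨i₀, hi₀⟩ := (hlim.eventually_ne hW.ne').exists
  obtain ⟨x₀, -⟩ := nonempty_of_measure_ne_zero (ENNReal.toReal_ne_zero.1 hi₀).1
  have : Nonempty X := ⟨x₀⟩
  have hfinE (i : ℕ) : μ (E i) ≠ ∞ := hfin _ (hbd i)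
  choose c hc using fun i R => exists_forall_measure_inter_ball_le (hbd i) (hfinE i) hsph R
  obtain ⟨φ, hφ, L, w, hL, hLw, hw0, hwW, hQ⟩ := exists_subseq_concentration_tendsto hfinE hlim
  have hfinF (i : ℕ) : μ ((E ∘ φ) i) ≠ ∞ := hfinE (φ i)
  have hlimF := hlim.comp hφ.tendsto_atTop
  have hQc (n : ℕ) : Tendsto (fun i => (μ (E (φ i) ∩ ball (c (φ i) n) n)).toReal) atTop
      (𝓝 (L n)) := (hQ n).congr fun i => concentration_eq_of_forall_le (hfinE _) (hc _ _)
  refine ⟨φ, hφ, ?_⟩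
  rcases hw0.eq_or_lt with rfl | hw0
  · have hV := ccVanishing_of_tendsto hfinF hQ hL hLw
    exact Or.inl ⟨hV, fun hC => hC.not_ccVanishing hfinF hW hV,
      fun hD => hD.not_ccVanishing hfinF hV⟩
  rcases hwW.eq_or_lt with rfl | hwW
  · have hC := ccCompactness_of_tendsto hfinF (hc <| φ ·) hlimF hQc hLw hw0
    exact Or.inr (Or.inl ⟨hC, hC.not_ccVanishing hfinF hw0, hC.not_ccDichotomy hfinF hlimF⟩)
  · have hD := ccDichotomy_of_tendsto hfinF (hc <| φ ·) hlimF hQc hL hLw hw0 hwW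
    exact Or.inr (Or.inr ⟨hD, hD.not_ccVanishing hfinF,
      fun hC => hC.not_ccDichotomy hfinF hlimF hD⟩)

/-- Concentration-compactness: up to a subsequence, exactly one of vanishing,
compactness and dichotomy occurs. -/
theorem concentration_compactness
    {X : Type*} [MetricSpace X] [ProperSpace X] [MeasurableSpace X] [BorelSpace X]
    (μ : Measure X)
    (hfin : ∀ s : Set X, IsBounded s → μ s ≠ ⊤)
    (hsph : ∀ (p : X) (r : ℝ), 0 < r → μ (sphere p r) = 0)
    (E : ℕ → Set X) (hmeas : ∀ i, MeasurableSet (E i))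
    (hbd : ∀ i, IsBounded (E i))
    (W : ℝ) (hW : 0 < W)
    (hlim : Tendsto (fun i => (μ (E i)).toReal) atTop (nhds W)) :
    ∃ φ : ℕ → ℕ, StrictMono φ ∧
      ((CCVanishing μ (E ∘ φ) ∧ ¬ CCCompactness μ (E ∘ φ) W ∧ ¬ CCDichotomy μ (E ∘ φ) W) ∨
       (CCCompactness μ (E ∘ φ) W ∧ ¬ CCVanishing μ (E ∘ φ) ∧ ¬ CCDichotomy μ (E ∘ φ) W) ∨
       (CCDichotomy μ (E ∘ φ) W ∧ ¬ CCVanishing μ (E ∘ φ) ∧ ¬ CCCompactness μ (E ∘ φ) W)) :=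
  concentration_compactness_general μ hfin hsph E hbd W hW hlim
end

section
/- Let n ≥ 2 be an integer, k ≤ 0, v₀ > 0 and c > 0. Let (X,d) be a proper metric space and let μ be a Borel measure on X with 0 < μ(B_r(x)) < ∞ for every open ball, satisfying the Bishop–Gromov inequality with respect to v(n,k,·) and with μ(B₁(q)) ≥ v₀ for every q ∈ X. Assume the following relative isoperimetric inequality in unit balls: for every Borel set F ⊆ X and every p ∈ X with μ(F ∩ B₁(p)) < (1/2)·μ(B₁(p)), one has μ(F ∩ B₁(p))^{(n−1)/n} ≤ c·H^{n−1}(∂*F ∩ B₁(p)). Then, setting C := (v(n,k,1/2)/(c·v(n,k,6)))ⁿ, for every nonempty bounded Borel set E ⊆ X with μ(E) > 0 and 0 < H^{n−1}(∂*E) < ∞ there exists p₀ ∈ X such that μ(E ∩ B₁(p₀)) ≥ min{ C·μ(E)ⁿ / H^{n−1}(∂*E)ⁿ , v₀/2 }. -/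
open MeasureTheory Metric Filter Bornology
open scoped ENNReal

/-- `sn_k`: the generalized sine function of the simply connected model
of constant sectional curvature `k ≤ 0`. -/
noncomputable def snK (k r : ℝ) : ℝ :=
  if k = 0 then r else Real.sinh (Real.sqrt (-k) * r) / Real.sqrt (-k)

/-- `s(n,k,r)`: surface area of the sphere of radius `r` in the `n`-dimensional
simply connected model of constant curvature `k`. -/
noncomputable def modelSurf (n : ℕ) (k r : ℝ) : ℝ :=
  n * (volume (ball (0 : EuclideanSpace ℝ (Fin n)) 1)).toReal * snK k r ^ (n - 1)

/-- `v(n,k,r)`: volume of the ball of radius `r` in the `n`-dimensional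
simply connected model of constant curvature `k`. -/
noncomputable def modelVol (n : ℕ) (k r : ℝ) : ℝ :=
  ∫ t in (0:ℝ)..r, modelSurf n k t

/-- A measure on a metric space satisfies the Bishop–Gromov inequality with respect to
`v(n,k,·)` if the ratios `μ(B_r(x))/v(n,k,r)` are nonincreasing in `r`. -/
def BishopGromov {X : Type*} [MetricSpace X] [MeasurableSpace X]
    (μ : Measure X) (n : ℕ) (k : ℝ) : Prop :=
  ∀ (x : X) (r R : ℝ), 0 < r → r ≤ R →
    (μ (ball x R)).toReal * modelVol n k r ≤ (μ (ball x r)).toReal * modelVol n k R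

/-- The set of points of density `t` of a set `E` in a metric measure space. -/
def densitySet {X : Type*} [MetricSpace X] [MeasurableSpace X]
    (μ : Measure X) (E : Set X) (t : ℝ≥0∞) : Set X :=
  {x : X | Tendsto (fun r : ℝ => μ (E ∩ ball x r) / μ (ball x r))
    (nhdsWithin 0 (Set.Ioi 0)) (nhds t)}

/-- The essential boundary of a set `E` in a metric measure space: the complement of
the union of the sets of points of density `0` and of density `1`. -/
def essBoundary {X : Type*} [MetricSpace X] [MeasurableSpace X]
    (μ : Measure X) (E : Set X) : Set X :=
  (densitySet μ E 0 ∪ densitySet μ E 1)ᶜ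

/-! If some unit ball already holds mass `v₀ / 2` of `E` there is nothing to prove. Otherwise
every unit ball holds less than half of its volume in `E`, so the relative isoperimetric
inequality applies in each of them. Cover `E` by the unit balls centred at a maximal
`1`-separated subset `S` of `E`. A point lies in at most `v(6) / v(1/2)` of these balls: the
disjoint balls `B_{1/2}(p)` around the centres near it all sit in one ball of radius `3/2`,
whose volume Bishop–Gromov compares with each of theirs. With `M` the largest of the masses
`m_p = μ(E ∩ B₁(p))`, `p ∈ S`, we get
`m_p = m_p^{1/n} m_p^{(n-1)/n} ≤ M^{1/n} c H^{n-1}(∂*E ∩ B₁(p))`, and summing over `S` gives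
`μ(E) ≤ M^{1/n} c (v(6) / v(1/2)) H^{n-1}(∂*E)`, which is the claimed lower bound for `M`. -/

theorem snK_pos {k : ℝ} (hk : k ≤ 0) {r : ℝ} (hr : 0 < r) : 0 < snK k r := by
  unfold snK
  split_ifs with h
  · exact hr
  · have : 0 < Real.sqrt (-k) := Real.sqrt_pos.2 (by grind)
    positivity

theorem continuous_snK (k : ℝ) : Continuous (snK k) := by
  unfold snK
  split_ifs
  · exact continuous_id
  · fun_prop

theorem modelSurf_pos {n : ℕ} (hn : 1 ≤ n) {k : ℝ} (hk : k ≤ 0) {r : ℝ} (hr : 0 < r) :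
    0 < modelSurf n k r := by
  have : 0 < (volume (ball (0 : EuclideanSpace ℝ (Fin n)) 1)).toReal :=
    ENNReal.toReal_pos (measure_ball_pos _ _ one_pos).ne' measure_ball_lt_top.ne
  have := snK_pos hk hr
  unfold modelSurf
  positivity

theorem modelVol_pos {n : ℕ} (hn : 1 ≤ n) {k : ℝ} (hk : k ≤ 0) {r : ℝ} (hr : 0 < r) :
    0 < modelVol n k r :=
  intervalIntegral.intervalIntegral_pos_of_pos_on
    ((continuous_const.mul ((continuous_snK k).pow _)).intervalIntegrable 0 r)
    (fun _ ht => modelSurf_pos hn hk ht.1) hr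

section Net

variable {X : Type*} [MetricSpace X]

theorem TotallyBounded.finite_of_pairwise_le_dist {s : Set X} (hs : TotallyBounded s) {ε : ℝ}
    (hε : 0 < ε) (hsep : s.Pairwise (ε ≤ dist · ·)) : s.Finite := by
  obtain ⟨t, ht, hst⟩ := totallyBounded_iff.1 hs (ε / 2) (half_pos hε)
  refine (ht.biUnion (t := fun y => s ∩ ball y (ε / 2)) fun y _ =>
    Set.Subsingleton.finite ?_).subset fun x hx => ?_
  · rintro p ⟨hp, hpy⟩ q ⟨hq, hqy⟩
    by_contra hpq
    have := dist_triangle_right p q y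
    rw [mem_ball] at hpy hqy
    linarith [hsep hp hq hpq]
  · obtain ⟨y, hy, hxy⟩ := Set.mem_iUnion₂.1 (hst hx)
    exact Set.mem_iUnion₂.2 ⟨y, hy, hx, hxy⟩

theorem TotallyBounded.exists_finset_pairwise_le_dist_subset_iUnion_ball {E : Set X}
    (hE : TotallyBounded E) {ε : ℝ} (hε : 0 < ε) :
    ∃ S : Finset X, (S : Set X).Pairwise (ε ≤ dist · ·) ∧ E ⊆ ⋃ p ∈ S, ball p ε := by
  obtain ⟨N, ⟨hNE, hNsep⟩, hNmax⟩ :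
      ∃ N, Maximal (fun N : Set X => N ⊆ E ∧ N.Pairwise (ε ≤ dist · ·)) N := by
    refine zorn_subset _ fun C hC hchain => ⟨⋃₀ C, ⟨?_, ?_⟩, fun _ => Set.subset_sUnion_of_mem⟩
    · exact Set.sUnion_subset fun N hN => (hC hN).1
    · exact hchain.pairwise_sUnion.2 fun N hN => (hC hN).2
  have hNfin := (hE.subset hNE).finite_of_pairwise_le_dist hε hNsep
  refine ⟨hNfin.toFinset, by simpa using hNsep, fun x hx => ?_⟩
  by_contra hcov
  simp only [Set.mem_iUnion, Set.Finite.mem_toFinset, mem_ball, not_exists, not_lt] at hcov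
  have hxN : x ∉ N := fun h => (hcov x h).not_gt (by simpa using hε)
  have hins : insert x N ⊆ E ∧ (insert x N).Pairwise (ε ≤ dist · ·) :=
    ⟨Set.insert_subset hx hNE, hNsep.insert_of_notMem hxN fun p hp =>
      ⟨hcov p hp, dist_comm x p ▸ hcov p hp⟩⟩
  exact hxN (hNmax hins (Set.subset_insert x N) (Set.mem_insert x N))

end Net

open Classical Finset in
theorem MeasureTheory.sum_measureReal_inter_le_of_forall_card_le {X ι : Type*}
    [MeasurableSpace X] (ν : Measure X) {s : Set X} (hs : ν s ≠ ∞) (S : Finset ι)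
    {A : ι → Set X} (hA : ∀ i, MeasurableSet (A i)) {N : ℝ}
    (hN : ∀ x, (#{i ∈ S | x ∈ A i} : ℝ) ≤ N) :
    ∑ i ∈ S, ν.real (s ∩ A i) ≤ N * ν.real s := by
  have : IsFiniteMeasure (ν.restrict s) := isFiniteMeasure_restrict.2 hs
  have hint : ∀ i, Integrable ((A i).indicator (1 : X → ℝ)) (ν.restrict s) :=
    fun i => (integrable_const 1).indicator (hA i)
  calc ∑ i ∈ S, ν.real (s ∩ A i)
      = ∫ x in s, ∑ i ∈ S, (A i).indicator 1 x ∂ν := by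
        rw [integral_finsetSum _ fun i _ => hint i]
        simp [hA, measureReal_restrict_apply, Set.inter_comm]
    _ ≤ ∫ _ in s, N ∂ν := by
        refine integral_mono (integrable_finsetSum _ fun i _ => hint i) (integrable_const N)
          fun x => ?_
        simpa [Set.indicator_apply] using hN x
    _ = N * ν.real s := by simp [mul_comm]

open Finset in
theorem BishopGromov.card_mul_modelVol_le {X : Type*} [MetricSpace X] [MeasurableSpace X]
    [OpensMeasurableSpace X] {μ : Measure X} {n : ℕ} {k : ℝ} (hBG : BishopGromov μ n k)
    (hn : 1 ≤ n) (hk : k ≤ 0) (hpos : ∀ (x : X) (r : ℝ), 0 < r → 0 < μ (ball x r))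
    (hfin : ∀ (x : X) (r : ℝ), 0 < r → μ (ball x r) ≠ ⊤) {ρ R : ℝ} (hρ : 0 < ρ)
    (hR : 2 + ρ / 2 ≤ R) {x : X} {I : Finset X} (hIx : ∀ p ∈ I, x ∈ ball p 1)
    (hI : (I : Set X).Pairwise (ρ ≤ dist · ·)) :
    #I * modelVol n k (ρ / 2) ≤ modelVol n k R := by
  set r := ρ / 2 with hr_def
  have hr : 0 < r := half_pos hρ
  have hx : 0 < μ.real (ball x (1 + r)) :=
    ENNReal.toReal_pos (hpos x _ (by positivity)).ne' (hfin x _ (by positivity))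
  have hdisj : (I : Set X).PairwiseDisjoint (ball · r) := fun p hp q hq hpq =>
    ball_disjoint_ball (by linarith [hI hp hq hpq])
  have hsub : ∀ p ∈ I, ball p r ⊆ ball x (1 + r) := fun p hp =>
    ball_subset_ball' (by linarith [dist_comm x p ▸ mem_ball.1 (hIx p hp)])
  have hcomp : ∀ p ∈ I, modelVol n k r * μ.real (ball x (1 + r)) ≤
      modelVol n k R * μ.real (ball p r) := fun p hp => by
    have hxp : μ.real (ball x (1 + r)) ≤ μ.real (ball p R) :=
      measureReal_mono (ball_subset_ball' (by linarith [mem_ball.1 (hIx p hp)]))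
        (hfin p R (by linarith))
    have : μ.real (ball p R) * modelVol n k r ≤ μ.real (ball p r) * modelVol n k R :=
      hBG p r R hr (by linarith)
    nlinarith [(modelVol_pos hn hk hr).le]
  refine le_of_mul_le_mul_right ?_ hx
  calc #I * modelVol n k r * μ.real (ball x (1 + r))
      = ∑ _p ∈ I, modelVol n k r * μ.real (ball x (1 + r)) := by simp [mul_assoc]
    _ ≤ ∑ p ∈ I, modelVol n k R * μ.real (ball p r) := sum_le_sum hcomp
    _ = modelVol n k R * μ.real (⋃ p ∈ I, ball p r) := by
        rw [measureReal_biUnion_finset hdisj (fun p _ => measurableSet_ball)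
          (fun p _ => hfin p r hr), mul_sum]
    _ ≤ modelVol n k R * μ.real (ball x (1 + r)) :=
        mul_le_mul_of_nonneg_left (measureReal_mono (Set.iUnion₂_subset hsub)
          (hfin x _ (by positivity))) (modelVol_pos hn hk (by linarith)).le

theorem BishopGromov.sum_measureReal_inter_ball_le {X : Type*} [MetricSpace X]
    [MeasurableSpace X] [OpensMeasurableSpace X] {μ : Measure X} {n : ℕ} {k : ℝ}
    (hBG : BishopGromov μ n k) (hn : 1 ≤ n) (hk : k ≤ 0)
    (hpos : ∀ (x : X) (r : ℝ), 0 < r → 0 < μ (ball x r))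
    (hfin : ∀ (x : X) (r : ℝ), 0 < r → μ (ball x r) ≠ ⊤) {ρ R : ℝ} (hρ : 0 < ρ)
    (hR : 2 + ρ / 2 ≤ R) {S : Finset X} (hS : (S : Set X).Pairwise (ρ ≤ dist · ·))
    (ν : Measure X) {s : Set X} (hs : ν s ≠ ∞) :
    ∑ p ∈ S, ν.real (s ∩ ball p 1) ≤ modelVol n k R / modelVol n k (ρ / 2) * ν.real s := by
  classical
  refine sum_measureReal_inter_le_of_forall_card_le ν hs S (fun _ => measurableSet_ball)
    fun x => (le_div_iff₀ (modelVol_pos hn hk (half_pos hρ))).2 ?_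
  exact hBG.card_mul_modelVol_le hn hk hpos hfin hρ hR (fun p hp => (Finset.mem_filter.1 hp).2)
    (hS.mono (Finset.coe_subset.2 (Finset.filter_subset _ _)))

theorem le_rpow_inv_mul_of_rpow_le {n : ℕ} (hn : n ≠ 0) {a M b : ℝ} (ha : 0 ≤ a) (haM : a ≤ M)
    (h : a ^ (((n : ℝ) - 1) / n) ≤ b) : a ≤ M ^ (n : ℝ)⁻¹ * b := by
  have hsplit : a = a ^ (n : ℝ)⁻¹ * a ^ (((n : ℝ) - 1) / n) := by
    have hexp : (n : ℝ)⁻¹ + ((n : ℝ) - 1) / n = 1 := by field_simp; ring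
    rw [← Real.rpow_add' ha (by rw [hexp]; exact one_ne_zero), hexp, Real.rpow_one]
  rw [hsplit]
  exact mul_le_mul (Real.rpow_le_rpow ha haM (by positivity)) h (by positivity)
    (Real.rpow_nonneg (ha.trans haM) _)

theorem div_pow_le_of_le_rpow_inv_mul {n : ℕ} (hn : n ≠ 0) {a b M : ℝ} (ha : 0 ≤ a) (hb : 0 ≤ b)
    (hM : 0 ≤ M) (h : a ≤ M ^ (n : ℝ)⁻¹ * b) : (a / b) ^ n ≤ M := by
  calc (a / b) ^ n ≤ (M ^ (n : ℝ)⁻¹) ^ n :=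
        pow_le_pow_left₀ (div_nonneg ha hb) (div_le_of_le_mul₀ hb (by positivity) h) n
    _ = M := Real.rpow_inv_natCast_pow hM hn

theorem MeasureTheory.measureReal_le_sum_inter_of_subset_biUnion {X ι : Type*}
    [MeasurableSpace X] (μ : Measure X) {E : Set X} (S : Finset ι) {A : ι → Set X}
    (hE : E ⊆ ⋃ i ∈ S, A i) : μ.real E ≤ ∑ i ∈ S, μ.real (E ∩ A i) := by
  calc μ.real E = μ.real (⋃ i ∈ S, E ∩ A i) := by
        rw [← Set.inter_iUnion₂, Set.inter_eq_left.2 hE]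
    _ ≤ ∑ i ∈ S, μ.real (E ∩ A i) := measureReal_biUnion_finset_le _ _

theorem local_mass_lower_bound_general
    {X : Type*} [MetricSpace X] [ProperSpace X] [MeasurableSpace X] [BorelSpace X]
    (n : ℕ) (hn : 2 ≤ n) (k : ℝ) (hk : k ≤ 0)
    (v₀ c : ℝ) (hc : 0 < c)
    (μ : Measure X)
    (hpos : ∀ (x : X) (r : ℝ), 0 < r → 0 < μ (ball x r))
    (hfin : ∀ (x : X) (r : ℝ), 0 < r → μ (ball x r) ≠ ⊤)
    (hBG : BishopGromov μ n k)
    (hv : ∀ q : X, ENNReal.ofReal v₀ ≤ μ (ball q 1))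
    (hiso : ∀ (F : Set X) (p : X), MeasurableSet F →
      (μ (F ∩ ball p 1)).toReal < (1 / 2) * (μ (ball p 1)).toReal →
      (μ (F ∩ ball p 1)).toReal ^ (((n : ℝ) - 1) / n) ≤
        c * (μH[(n : ℝ) - 1] (essBoundary μ F ∩ ball p 1)).toReal)
    (E : Set X) (hE : MeasurableSet E) (hEne : E.Nonempty) (hEbd : IsBounded E)
    (hPfin : μH[(n : ℝ) - 1] (essBoundary μ E) ≠ ⊤) :
    ∃ p₀ : X,
      min ((modelVol n k (1 / 2) / (c * modelVol n k 6)) ^ n * (μ E).toReal ^ n /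
            (μH[(n : ℝ) - 1] (essBoundary μ E)).toReal ^ n)
          (v₀ / 2)
        ≤ (μ (E ∩ ball p₀ 1)).toReal := by
  by_cases hbig : ∃ p, v₀ / 2 ≤ (μ (E ∩ ball p 1)).toReal
  · obtain ⟨p, hp⟩ := hbig
    exact ⟨p, (min_le_right _ _).trans hp⟩
  push Not at hbig
  have hn0 : n ≠ 0 := by omega
  obtain ⟨S, hSsep, hScov⟩ := (hEbd.isCompact_closure.totallyBounded.subset
    subset_closure).exists_finset_pairwise_le_dist_subset_iUnion_ball one_pos
  obtain ⟨x, hx⟩ := hEne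
  obtain ⟨p₀, -, hp₀⟩ := S.exists_max_image (fun p => μ.real (E ∩ ball p 1))
    (let ⟨p, hp, _⟩ := Set.mem_iUnion₂.1 (hScov hx); ⟨p, hp⟩)
  refine ⟨p₀, (min_le_left _ _).trans ?_⟩
  have hlocal : ∀ p ∈ S, μ.real (E ∩ ball p 1) ≤ μ.real (E ∩ ball p₀ 1) ^ (n : ℝ)⁻¹ *
      (c * μH[(n : ℝ) - 1].real (essBoundary μ E ∩ ball p 1)) := fun p hp =>
    le_rpow_inv_mul_of_rpow_le hn0 measureReal_nonneg (hp₀ p hp) (hiso E p hE (by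
      linarith [hbig p, (ENNReal.ofReal_le_iff_le_toReal (hfin p 1 one_pos)).1 (hv p)]))
  have hmass : μ.real E ≤ μ.real (E ∩ ball p₀ 1) ^ (n : ℝ)⁻¹ *
      (c * (modelVol n k 6 / modelVol n k (1 / 2) * μH[(n : ℝ) - 1].real (essBoundary μ E))) :=
    calc μ.real E ≤ ∑ p ∈ S, μ.real (E ∩ ball p 1) :=
          measureReal_le_sum_inter_of_subset_biUnion μ S hScov
      _ ≤ ∑ p ∈ S, μ.real (E ∩ ball p₀ 1) ^ (n : ℝ)⁻¹ *
            (c * μH[(n : ℝ) - 1].real (essBoundary μ E ∩ ball p 1)) := Finset.sum_le_sum hlocal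
      _ ≤ _ := by
          rw [← Finset.mul_sum, ← Finset.mul_sum]
          gcongr
          exact hBG.sum_measureReal_inter_ball_le (by omega) hk hpos hfin one_pos (by norm_num)
            hSsep _ hPfin
  have hv₆ : 0 < modelVol n k 6 := modelVol_pos (by omega) hk (by norm_num)
  have hv₂ : 0 < modelVol n k (1 / 2) := modelVol_pos (by omega) hk (by norm_num)
  calc _ = (μ.real E / (c * (modelVol n k 6 / modelVol n k (1 / 2) *
          μH[(n : ℝ) - 1].real (essBoundary μ E)))) ^ n := by
            simp only [measureReal_def, div_eq_mul_inv, mul_inv, inv_inv]; ring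
    _ ≤ _ := div_pow_le_of_le_rpow_inv_mul hn0 measureReal_nonneg (by positivity)
          measureReal_nonneg hmass

/-- Local mass lower bound: under Bishop–Gromov, noncollapsedness and a relative
isoperimetric inequality in unit balls, any bounded set of finite perimeter concentrates
a definite amount of its mass in some unit ball. -/
theorem local_mass_lower_bound
    {X : Type*} [MetricSpace X] [ProperSpace X] [MeasurableSpace X] [BorelSpace X]
    (n : ℕ) (hn : 2 ≤ n) (k : ℝ) (hk : k ≤ 0)
    (v₀ c : ℝ) (hv₀ : 0 < v₀) (hc : 0 < c)
    (μ : Measure X)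
    (hpos : ∀ (x : X) (r : ℝ), 0 < r → 0 < μ (ball x r))
    (hfin : ∀ (x : X) (r : ℝ), 0 < r → μ (ball x r) ≠ ⊤)
    (hBG : BishopGromov μ n k)
    (hv : ∀ q : X, ENNReal.ofReal v₀ ≤ μ (ball q 1))
    (hiso : ∀ (F : Set X) (p : X), MeasurableSet F →
      (μ (F ∩ ball p 1)).toReal < (1 / 2) * (μ (ball p 1)).toReal →
      (μ (F ∩ ball p 1)).toReal ^ (((n : ℝ) - 1) / n) ≤
        c * (μH[(n : ℝ) - 1] (essBoundary μ F ∩ ball p 1)).toReal)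
    (E : Set X) (hE : MeasurableSet E) (hEne : E.Nonempty) (hEbd : IsBounded E)
    (hEpos : 0 < μ E)
    (hPpos : 0 < μH[(n : ℝ) - 1] (essBoundary μ E))
    (hPfin : μH[(n : ℝ) - 1] (essBoundary μ E) ≠ ⊤) :
    ∃ p₀ : X,
      min ((modelVol n k (1 / 2) / (c * modelVol n k 6)) ^ n * (μ E).toReal ^ n /
            (μH[(n : ℝ) - 1] (essBoundary μ E)).toReal ^ n)
          (v₀ / 2)
        ≤ (μ (E ∩ ball p₀ 1)).toReal :=
  local_mass_lower_bound_general n hn k hk v₀ c hc μ hpos hfin hBG hv hiso E hE hEne hEbd hPfin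
end

section
/- Let n ≥ 2 be an integer, c > 0 and r₀ ∈ ℝ. Let V : [r₀, ∞) → [0, ∞) be a nonincreasing function such that for Lebesgue-almost every r > r₀ the function V is differentiable at r and satisfies V′(r) ≤ −c·V(r)^{(n−1)/n}. Then V(r) = 0 for every r ≥ r₀ + (n/c)·V(r₀)^{1/n}; in particular there exists a finite r̄ such that V vanishes identically on [r̄, ∞). -/
open MeasureTheory Set Filter

/-!
Substituting `W = V ^ (1 / n)` linearises the differential inequality: wherever `V > 0`, the chain
rule gives `W' ≤ -c / n`. An antitone function decreases at least by the integral of its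
(a.e.) derivative, so if `V` were still positive at `r` then
`0 < W r ≤ W r₀ - (c / n) (r - r₀)`, which bounds `r` by `r₀ + (n / c) W r₀`.
-/

theorem AntitoneOn.sub_le_intervalIntegral_deriv {f : ℝ → ℝ} {a b : ℝ} (hab : a ≤ b)
    (hf : AntitoneOn f (Icc a b)) : f b - f a ≤ ∫ x in a..b, deriv f x := by
  have hneg : MonotoneOn (-f) (uIcc a b) := by rw [uIcc_of_le hab]; exact hf.neg
  have hfab : f b ≤ f a := hf (left_mem_Icc.2 hab) (right_mem_Icc.2 hab) hab
  have h := hneg.intervalIntegral_deriv_mem_uIcc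
  rw [deriv.neg', intervalIntegral.integral_neg, Pi.neg_apply, Pi.neg_apply,
    uIcc_of_le (by linarith)] at h
  linarith [h.2]

theorem AntitoneOn.sub_le_mul_of_ae_deriv_le {f : ℝ → ℝ} {a b k : ℝ} (hab : a ≤ b)
    (hf : AntitoneOn f (Icc a b)) (hderiv : ∀ᵐ x, x ∈ Ioo a b → deriv f x ≤ k) :
    f b - f a ≤ k * (b - a) := by
  have hint : IntervalIntegrable (deriv f) volume a b := by
    rw [← neg_neg f, deriv.neg']
    exact (MonotoneOn.intervalIntegrable_deriv (by rw [uIcc_of_le hab]; exact hf.neg)).neg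
  calc f b - f a ≤ ∫ x in a..b, deriv f x := hf.sub_le_intervalIntegral_deriv hab
    _ ≤ ∫ _ in a..b, k := by
      refine intervalIntegral.integral_mono_ae_restrict hab hint intervalIntegrable_const ?_
      rw [EventuallyLE, ← restrict_Ioo_eq_restrict_Icc, ae_restrict_iff' measurableSet_Ioo]
      exact hderiv
    _ = k * (b - a) := by rw [intervalIntegral.integral_const, smul_eq_mul, mul_comm]

theorem deriv_rpow_le_of_deriv_le_neg_mul_rpow {V : ℝ → ℝ} {x c p : ℝ} (hp : 0 < p)
    (hV : DifferentiableAt ℝ V x) (hVx : 0 < V x) (hderiv : deriv V x ≤ -c * V x ^ (1 - p)) :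
    deriv (fun y => V y ^ p) x ≤ -(c * p) := by
  have hprod : V x ^ (1 - p) * V x ^ (p - 1) = 1 := by
    rw [← Real.rpow_add hVx, sub_add_sub_cancel', sub_self, Real.rpow_zero]
  rw [(hV.hasDerivAt.rpow_const (Or.inl hVx.ne')).deriv]
  calc deriv V x * p * V x ^ (p - 1) ≤ (-c * V x ^ (1 - p)) * p * V x ^ (p - 1) := by gcongr
    _ = -(c * p) := by linear_combination (-c * p) * hprod

theorem eq_zero_of_ae_deriv_le_neg_mul_rpow {V : ℝ → ℝ} {r₀ c p : ℝ} (hp : 0 < p) (hc : 0 < c)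
    (hnonneg : ∀ r, r₀ ≤ r → 0 ≤ V r) (hmono : AntitoneOn V (Ici r₀))
    (hderiv : ∀ᵐ r, r₀ < r → DifferentiableAt ℝ V r ∧ deriv V r ≤ -c * V r ^ (1 - p))
    {r : ℝ} (hr : r₀ + V r₀ ^ p / (c * p) ≤ r) : V r = 0 := by
  have hcp : 0 < c * p := mul_pos hc hp
  have hV₀ : 0 ≤ V r₀ ^ p / (c * p) := by have := hnonneg r₀ le_rfl; positivity
  have hr₀r : r₀ ≤ r := by linarith
  by_contra hVr
  have hVr_pos : 0 < V r := (hnonneg r hr₀r).lt_of_ne' hVr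
  have hV_pos : ∀ s ∈ Ioo r₀ r, 0 < V s := fun s hs =>
    hVr_pos.trans_le (hmono (mem_Ici.2 hs.1.le) hr₀r hs.2.le)
  have hW : AntitoneOn (fun s => V s ^ p) (Icc r₀ r) := fun s hs t ht hst =>
    Real.rpow_le_rpow (hnonneg t ht.1) (hmono (mem_Ici.2 hs.1) (mem_Ici.2 ht.1) hst) hp.le
  have hW' : ∀ᵐ s, s ∈ Ioo r₀ r → deriv (fun s => V s ^ p) s ≤ -(c * p) := by
    filter_upwards [hderiv] with s hs hs_mem
    obtain ⟨hdiff, hle⟩ := hs hs_mem.1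
    exact deriv_rpow_le_of_deriv_le_neg_mul_rpow hp hdiff (hV_pos s hs_mem) hle
  have hdecay := hW.sub_le_mul_of_ae_deriv_le hr₀r hW'
  have hWr : 0 < V r ^ p := Real.rpow_pos_of_pos hVr_pos p
  have hbound : V r₀ ^ p ≤ c * p * (r - r₀) := (div_le_iff₀' hcp).1 (by linarith)
  linarith

/-- ODE comparison: a nonincreasing nonnegative function satisfying
`V' ≤ -c V^{(n-1)/n}` almost everywhere vanishes in finite time. -/
theorem ode_extinction (n : ℕ) (hn : 2 ≤ n) (c r₀ : ℝ) (hc : 0 < c)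
    (V : ℝ → ℝ)
    (hnonneg : ∀ r, r₀ ≤ r → 0 ≤ V r)
    (hmono : AntitoneOn V (Set.Ici r₀))
    (hdiff : ∀ᵐ r : ℝ, r₀ < r → DifferentiableAt ℝ V r ∧
      deriv V r ≤ -c * V r ^ (((n : ℝ) - 1) / n)) :
    (∀ r : ℝ, r₀ + (n / c) * V r₀ ^ ((1 : ℝ) / n) ≤ r → V r = 0) ∧
    ∃ rbar : ℝ, ∀ r : ℝ, rbar ≤ r → V r = 0 := by
  have hn₀ : (0 : ℝ) < n := Nat.cast_pos.2 (by omega)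
  have hexp : ((n : ℝ) - 1) / n = 1 - 1 / n := by field_simp
  have hbound : (n / c) * V r₀ ^ ((1 : ℝ) / n) = V r₀ ^ ((1 : ℝ) / n) / (c * (1 / n)) := by
    field_simp
  have hextinct : ∀ r : ℝ, r₀ + (n / c) * V r₀ ^ ((1 : ℝ) / n) ≤ r → V r = 0 := fun r hr =>
    eq_zero_of_ae_deriv_le_neg_mul_rpow (one_div_pos.2 hn₀) hc hnonneg hmono
      (by simpa only [hexp] using hdiff) (hbound ▸ hr)
  exact ⟨hextinct, _, hextinct⟩
end
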